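/- Let A, B be strictly positive bounded operators on a complex Hilbert space with A ≤ B and m·1 ≤ B ≤ M·1 for scalars 0 < m < M. Then for p ≤ 0 and -1 ≤ q ≤ 0: B^p ≤ exp( ((M·1 - B)/(M-m))·ln m^p + ((B - m·1)/(M-m))·ln M^p ) ≤ K(m,M,p,q)·A^q, where K(m,M,p,q) = (m M^p - M m^p)/((q-1)(M-m)) · ( ((q-1)/q)·(M^p - m^p)/(m M^p - M m^p) )^q when m ≤ q(m M^p - M m^p)/((q-1)(M^p - m^p)) ≤ M, and K(m,M,p,q) = max{m^(p-q), M^(p-q)} otherwise. -/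

import Mathlib

/-!
Since `m ≤ B ≤ M`, the spectrum of `B` lies in `[m, M]`, so every inequality between functions of
`B` alone is a scalar inequality on `[m, M]`, transported by the functional calculus. Pointwise,
`t ^ p ≤ exp (chord of log (t ^ p))` by concavity of `log` (as `p ≤ 0`), the exponential of a
convex combination of logarithms is at most the chord `L t` of `t ↦ t ^ p` by convexity of `exp`,
and `L t ≤ K * t ^ q` because `K` is the maximum on `[m, M]` of the concave function
`L t * t ^ (-q)`, whose critical point is the quantity tested in the definition of `K`.
Finally `B ^ q ≤ A ^ q` for `-1 ≤ q ≤ 0`: Löwner–Heinz gives `A ^ (-q) ≤ B ^ (-q)`, and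
inversion is operator antitone.
-/

open Real Set

noncomputable def kantorovichConst (m M p q : ℝ) : ℝ :=
  if q * (m * M ^ p - M * m ^ p) / ((q - 1) * (M ^ p - m ^ p)) ∈ Icc m M then
    (m * M ^ p - M * m ^ p) / ((q - 1) * (M - m)) *
      (((q - 1) / q) * (M ^ p - m ^ p) / (m * M ^ p - M * m ^ p)) ^ q
  else
    max (m ^ (p - q)) (M ^ (p - q))

lemma rpow_le_tangent {r s t : ℝ} (hr0 : 0 ≤ r) (hr1 : r ≤ 1) (hs : 0 < s) (ht : 0 < t) :
    t ^ r ≤ s ^ (r - 1) * ((1 - r) * s + r * t) := by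
  have bernoulli : (t / s) ^ r ≤ 1 + r * (t / s - 1) := by
    simpa using rpow_one_add_le_one_add_mul_self (s := t / s - 1)
      (by linarith [div_pos ht hs]) hr0 hr1
  calc t ^ r = s ^ r * (t / s) ^ r := by rw [div_rpow ht.le hs.le]; field_simp
    _ ≤ s ^ r * (1 + r * (t / s - 1)) := by gcongr
    _ = s ^ (r - 1) * ((1 - r) * s + r * t) := by
      rw [rpow_sub_one hs.ne']; field_simp; ring

/-- `c` is the critical point of `u ↦ (a * u + b) * u ^ r`; the function is concave, so it is
bounded by its value at `s` on the side of `s` away from `c`. -/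
lemma affine_mul_rpow_le {a b c r s t : ℝ} (ha : a ≤ 0) (hr0 : 0 ≤ r) (hr1 : r ≤ 1)
    (hs : 0 < s) (ht : 0 < t) (hL : 0 ≤ a * t + b) (hc : a * (1 + r) * c + r * b = 0)
    (hts : 0 ≤ (t - s) * (s - c)) :
    (a * t + b) * t ^ r ≤ (a * s + b) * s ^ r := by
  have hslope : (t - s) * (a * (1 + r) * s + r * b) ≤ 0 := by
    rw [show (t - s) * (a * (1 + r) * s + r * b) = a * (1 + r) * ((t - s) * (s - c)) by
      linear_combination (t - s) * hc]
    exact mul_nonpos_of_nonpos_of_nonneg (mul_nonpos_of_nonpos_of_nonneg ha (by linarith)) hts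
  calc (a * t + b) * t ^ r ≤ (a * t + b) * (s ^ (r - 1) * ((1 - r) * s + r * t)) :=
        mul_le_mul_of_nonneg_left (rpow_le_tangent hr0 hr1 hs ht) hL
    _ = s ^ (r - 1) * (s * (a * s + b) + (t - s) * (a * (1 + r) * s + r * b)
          + a * r * (t - s) ^ 2) := by ring
    _ ≤ s ^ (r - 1) * (s * (a * s + b)) := by
      have : a * r * (t - s) ^ 2 ≤ 0 :=
        mul_nonpos_of_nonpos_of_nonneg (mul_nonpos_of_nonpos_of_nonneg ha hr0) (sq_nonneg _)
      gcongr
      linarith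
    _ = (a * s + b) * s ^ r := by rw [rpow_sub_one hs.ne']; field_simp

lemma exp_add_mul_log_le {w₁ w₂ x y : ℝ} (hw₁ : 0 ≤ w₁) (hw₂ : 0 ≤ w₂) (hw : w₁ + w₂ = 1)
    (hx : 0 < x) (hy : 0 < y) : exp (w₁ * log x + w₂ * log y) ≤ w₁ * x + w₂ * y := by
  simpa only [smul_eq_mul, exp_log hx, exp_log hy] using
    convexOn_exp.2 (mem_univ (log x)) (mem_univ (log y)) hw₁ hw₂ hw

section Chord

variable {m M p q : ℝ}

lemma chord_weights (hmM : m < M) {t : ℝ} (ht : t ∈ Icc m M) :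
    0 ≤ (M - t) / (M - m) ∧ 0 ≤ (t - m) / (M - m) ∧ (M - t) / (M - m) + (t - m) / (M - m) = 1 ∧
      (M - t) / (M - m) * m + (t - m) / (M - m) * M = t := by
  have hd : 0 < M - m := sub_pos.mpr hmM
  refine ⟨div_nonneg (by linarith [ht.2]) hd.le, div_nonneg (by linarith [ht.1]) hd.le, ?_, ?_⟩ <;>
    field_simp <;> ring

lemma chord_eq_affine (hmM : m ≠ M) (u : ℝ) :
    (M - u) / (M - m) * m ^ p + (u - m) / (M - m) * M ^ p
      = (M ^ p - m ^ p) / (M - m) * u + (M * m ^ p - m * M ^ p) / (M - m) := by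
  have hd : M - m ≠ 0 := sub_ne_zero.mpr hmM.symm
  field_simp
  ring

lemma rpow_le_exp_interpolate_log (hm : 0 < m) (hmM : m < M) (hp : p ≤ 0) {t : ℝ}
    (ht : t ∈ Icc m M) :
    t ^ p ≤ exp ((M - t) / (M - m) * log (m ^ p) + (t - m) / (M - m) * log (M ^ p)) := by
  obtain ⟨hw₁, hw₂, hw, hcomb⟩ := chord_weights hmM ht
  have hlog : (M - t) / (M - m) * log m + (t - m) / (M - m) * log M ≤ log t := by
    simpa only [smul_eq_mul, hcomb] using
      strictConcaveOn_log_Ioi.concaveOn.2 hm (hm.trans hmM) hw₁ hw₂ hw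
  rw [rpow_def_of_pos (hm.trans_le ht.1), log_rpow hm, log_rpow (hm.trans hmM)]
  exact exp_le_exp.mpr (by nlinarith)

lemma exp_interpolate_log_le (hm : 0 < m) (hmM : m < M) {t : ℝ} (ht : t ∈ Icc m M) :
    exp ((M - t) / (M - m) * log (m ^ p) + (t - m) / (M - m) * log (M ^ p))
      ≤ (M - t) / (M - m) * m ^ p + (t - m) / (M - m) * M ^ p := by
  obtain ⟨hw₁, hw₂, hw, -⟩ := chord_weights hmM ht
  exact exp_add_mul_log_le hw₁ hw₂ hw (rpow_pos_of_pos hm p) (rpow_pos_of_pos (hm.trans hmM) p)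

lemma kantorovichConst_of_mem {a b c : ℝ} (hm : 0 < m) (hmM : m < M) (hq0 : q ≤ 0)
    (ha : a = (M ^ p - m ^ p) / (M - m)) (hb : b = (M * m ^ p - m * M ^ p) / (M - m))
    (hc : c = q * (m * M ^ p - M * m ^ p) / ((q - 1) * (M ^ p - m ^ p))) (hcI : c ∈ Icc m M) :
    kantorovichConst m M p q = (a * c + b) * c ^ (-q) := by
  have hc0 : 0 < c := hm.trans_le hcI.1
  have hd : M - m ≠ 0 := sub_ne_zero.mpr hmM.ne'
  have hq : q ≠ 0 := by rintro rfl; simp [hc] at hc0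
  have hN : m * M ^ p - M * m ^ p ≠ 0 := by intro h; simp [hc, h] at hc0
  have hD : M ^ p - m ^ p ≠ 0 := by intro h; simp [hc, h] at hc0
  have hq1 : q - 1 ≠ 0 := by intro h; linarith
  have hbase : (q - 1) / q * (M ^ p - m ^ p) / (m * M ^ p - M * m ^ p) = c⁻¹ := by
    rw [hc]; field_simp
  have hval : (m * M ^ p - M * m ^ p) / ((q - 1) * (M - m)) = a * c + b := by
    rw [ha, hb, hc]; field_simp; ring
  rw [kantorovichConst, if_pos (hc ▸ hcI), hbase, hval, inv_rpow hc0.le, rpow_neg hc0.le]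

lemma chord_mul_rpow_neg_le_kantorovichConst_of_neg (hm : 0 < m) (hmM : m < M) (hp : p < 0)
    (hq1 : -1 ≤ q) (hq0 : q ≤ 0) {t : ℝ} (ht : t ∈ Icc m M) :
    ((M - t) / (M - m) * m ^ p + (t - m) / (M - m) * M ^ p) * t ^ (-q)
      ≤ kantorovichConst m M p q := by
  have hM : 0 < M := hm.trans hmM
  set a := (M ^ p - m ^ p) / (M - m) with ha
  set b := (M * m ^ p - m * M ^ p) / (M - m) with hb
  set c := q * (m * M ^ p - M * m ^ p) / ((q - 1) * (M ^ p - m ^ p)) with hc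
  have hMp : M ^ p < m ^ p := rpow_lt_rpow_of_neg hm hmM hp
  have ha0 : a < 0 := div_neg_of_neg_of_pos (by linarith) (by linarith)
  have hd : M - m ≠ 0 := sub_ne_zero.mpr hmM.ne'
  have hcrit : a * (1 + -q) * c + -q * b = 0 := by
    have : q - 1 ≠ 0 := by linarith
    have : M ^ p - m ^ p ≠ 0 := by linarith
    rw [ha, hb, hc]; field_simp; ring
  have key : ∀ s ∈ Icc m M, 0 ≤ (t - s) * (s - c) →
      (a * t + b) * t ^ (-q) ≤ (a * s + b) * s ^ (-q) := fun s hs hts => by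
    refine affine_mul_rpow_le ha0.le (by linarith) (by linarith) (hm.trans_le hs.1)
      (hm.trans_le ht.1) ?_ hcrit hts
    obtain ⟨hw₁, hw₂, -⟩ := chord_weights hmM ht
    rw [← chord_eq_affine hmM.ne]
    positivity
  have hfm : (a * m + b) * m ^ (-q) = m ^ (p - q) := by
    rw [← chord_eq_affine hmM.ne, sub_eq_add_neg p, rpow_add hm]; simp [div_self hd]
  have hfM : (a * M + b) * M ^ (-q) = M ^ (p - q) := by
    rw [← chord_eq_affine hmM.ne, sub_eq_add_neg p, rpow_add hM]; simp [div_self hd]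
  rw [chord_eq_affine hmM.ne]
  by_cases hcI : c ∈ Icc m M
  · rw [kantorovichConst_of_mem hm hmM hq0 ha hb hc hcI]
    exact key c hcI (by simp)
  · rw [kantorovichConst, if_neg hcI]
    rcases not_and_or.mp hcI with hcm | hcM
    · calc _ ≤ (a * m + b) * m ^ (-q) :=
            key m (left_mem_Icc.mpr hmM.le) (mul_nonneg (by linarith [ht.1]) (by linarith))
        _ ≤ _ := hfm ▸ le_max_left _ _
    · calc _ ≤ (a * M + b) * M ^ (-q) :=
            key M (right_mem_Icc.mpr hmM.le)
              (mul_nonneg_of_nonpos_of_nonpos (by linarith [ht.2]) (by linarith))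
        _ ≤ _ := hfM ▸ le_max_right _ _

lemma chord_mul_rpow_neg_le_kantorovichConst (hm : 0 < m) (hmM : m < M) (hp : p ≤ 0)
    (hq1 : -1 ≤ q) (hq0 : q ≤ 0) {t : ℝ} (ht : t ∈ Icc m M) :
    ((M - t) / (M - m) * m ^ p + (t - m) / (M - m) * M ^ p) * t ^ (-q)
      ≤ kantorovichConst m M p q := by
  rcases hp.lt_or_eq with hp | rfl
  · exact chord_mul_rpow_neg_le_kantorovichConst_of_neg hm hmM hp hq1 hq0 ht
  obtain ⟨-, -, hw, -⟩ := chord_weights hmM ht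
  have hc : (0 : ℝ) ∉ Icc m M := fun h => hm.not_ge h.1
  simp only [kantorovichConst, rpow_zero, mul_one, hw, one_mul, sub_self, mul_zero, div_zero,
    if_neg hc, zero_sub]
  exact (rpow_le_rpow (hm.trans_le ht.1).le ht.2 (by linarith)).trans (le_max_right _ _)

lemma chord_le_kantorovichConst_mul_rpow (hm : 0 < m) (hmM : m < M) (hp : p ≤ 0)
    (hq1 : -1 ≤ q) (hq0 : q ≤ 0) {t : ℝ} (ht : t ∈ Icc m M) :
    (M - t) / (M - m) * m ^ p + (t - m) / (M - m) * M ^ p ≤ kantorovichConst m M p q * t ^ q := by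
  have ht0 : 0 < t := hm.trans_le ht.1
  have h := mul_le_mul_of_nonneg_right
    (chord_mul_rpow_neg_le_kantorovichConst hm hmM hp hq1 hq0 ht) (rpow_pos_of_pos ht0 q).le
  rwa [mul_assoc, ← rpow_add ht0, neg_add_cancel, rpow_zero, mul_one] at h

lemma kantorovichConst_pos (hm : 0 < m) (hmM : m < M) (hp : p ≤ 0) (hq1 : -1 ≤ q)
    (hq0 : q ≤ 0) : 0 < kantorovichConst m M p q := by
  have h := chord_le_kantorovichConst_mul_rpow hm hmM hp hq1 hq0 (left_mem_Icc.mpr hmM.le)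
  simp only [sub_self, zero_div, zero_mul, add_zero, div_self (sub_ne_zero.mpr hmM.ne'),
    one_mul] at h
  exact pos_of_mul_pos_left ((rpow_pos_of_pos hm p).trans_le h) (rpow_pos_of_pos hm q).le

end Chord

section Operator

variable {A : Type*} [CStarAlgebra A] [PartialOrder A] [StarOrderedRing A]

lemma CFC.rpow_le_rpow_of_mem_Icc_neg_one_zero {q : ℝ} (hq : q ∈ Icc (-1) 0) {a b : A}
    (ha : IsStrictlyPositive a) (hab : a ≤ b) : b ^ q ≤ a ^ q := by
  have hb : IsStrictlyPositive b := ha.of_le hab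
  rcases hq.2.lt_or_eq with hq0 | rfl
  · have h := CStarAlgebra.rpow_neg_one_le_rpow_neg_one
      (CFC.rpow_le_rpow (p := -q) ⟨by linarith, by linarith [hq.1]⟩ hab)
      (IsStrictlyPositive.rpow a (-q))
    rwa [CFC.rpow_rpow a _ _ (by linarith), CFC.rpow_rpow b _ _ (by linarith), neg_mul_neg,
      mul_one] at h
  · rw [CFC.rpow_zero a, CFC.rpow_zero b]

lemma spectrum_subset_Icc_of_smul_one_le {a : A} (ha : IsSelfAdjoint a) {m M : ℝ}
    (hm : m • (1 : A) ≤ a) (hM : a ≤ M • (1 : A)) : spectrum ℝ a ⊆ Icc m M := by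
  rw [← Algebra.algebraMap_eq_smul_one] at hm hM
  exact fun x hx => ⟨(algebraMap_le_iff_le_spectrum ha).mp hm x hx,
    (le_algebraMap_iff_spectrum_le ha).mp hM x hx⟩

end Operator

theorem stmt_5 {H : Type*} [NormedAddCommGroup H] [InnerProductSpace ℂ H] [CompleteSpace H]
    (A B : H →L[ℂ] H) (hA0 : 0 ≤ A) (hAu : IsUnit A)
    (m M : ℝ) (hm : 0 < m) (hmM : m < M)
    (hAB : A ≤ B) (hmB : m • (1 : H →L[ℂ] H) ≤ B) (hBM : B ≤ M • (1 : H →L[ℂ] H))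
    (p q : ℝ) (hp : p ≤ 0) (hq1 : -1 ≤ q) (hq0 : q ≤ 0) (K : ℝ)
    (hK : K =
      if q * (m * M ^ p - M * m ^ p) / ((q - 1) * (M ^ p - m ^ p)) ∈ Set.Icc m M then
        (m * M ^ p - M * m ^ p) / ((q - 1) * (M - m)) *
          (((q - 1) / q) * (M ^ p - m ^ p) / (m * M ^ p - M * m ^ p)) ^ q
      else
        max (m ^ (p - q)) (M ^ (p - q))) :
    cfc (fun t : ℝ => t ^ p) B ≤
      cfc (fun t : ℝ => Real.exp (((M - t) / (M - m)) * Real.log (m ^ p) +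
        ((t - m) / (M - m)) * Real.log (M ^ p))) B ∧
    cfc (fun t : ℝ => Real.exp (((M - t) / (M - m)) * Real.log (m ^ p) +
        ((t - m) / (M - m)) * Real.log (M ^ p))) B ≤
      K • cfc (fun t : ℝ => t ^ q) A := by
  obtain rfl : K = kantorovichConst m M p q := hK
  have hB0 : 0 ≤ B := hA0.trans hAB
  have hσ := spectrum_subset_Icc_of_smul_one_le (IsSelfAdjoint.of_nonneg hB0) hmB hBM
  have hrpow (r : ℝ) : ContinuousOn (fun t : ℝ => t ^ r) (spectrum ℝ B) :=
    continuousOn_id.rpow_const fun t ht => .inl (hm.trans_le (hσ ht).1).ne'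
  refine ⟨cfc_mono (fun t ht => rpow_le_exp_interpolate_log hm hmM hp (hσ ht)) (hrpow p), ?_⟩
  calc _ ≤ cfc (fun t : ℝ => kantorovichConst m M p q * t ^ q) B :=
        cfc_mono (fun t ht => (exp_interpolate_log_le hm hmM (hσ ht)).trans
          (chord_le_kantorovichConst_mul_rpow hm hmM hp hq1 hq0 (hσ ht)))
          (by fun_prop) (continuousOn_const.mul (hrpow q))
    _ = kantorovichConst m M p q • B ^ q := by
      rw [cfc_const_mul _ (fun t : ℝ => t ^ q) _ (hrpow q), CFC.rpow_eq_cfc_real]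
    _ ≤ kantorovichConst m M p q • A ^ q := smul_le_smul_of_nonneg_left
        (CFC.rpow_le_rpow_of_mem_Icc_neg_one_zero ⟨hq1, hq0⟩ (hAu.isStrictlyPositive hA0) hAB)
        (kantorovichConst_pos hm hmM hp hq1 hq0).le
    _ = _ := by rw [CFC.rpow_eq_cfc_real]
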